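/- Let O, S ∈ ℝ^{n×m} be matrices such that every centered column Ō_j and S̄_j is nonzero. Then Corr(O) = Corr(S) if and only if there exist an orthogonal matrix Q ∈ ℝ^{n×n} and a diagonal matrix N ∈ ℝ^{m×m} with strictly positive diagonal entries such that Q Ō N = S̄. -/

import Mathlib

/-!
The correlation matrix of `A` is the Gram matrix `NᵀN` of the matrix `N` of normalised centred
columns of `A`. It depends only on the Gram matrix `ĀᵀĀ`, which an orthogonal factor on the left
leaves unchanged, and it is unchanged by a positive diagonal factor on the right. Conversely, two
matrices `A`, `B` with `AᵀA = BᵀB` satisfy `‖Ax‖ = ‖Bx‖`, so `Ax ↦ Bx` is a well-defined isometry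
on the range of `A`; extending it to an isometry of the whole space gives an orthogonal `Q` with
`QA = B`.
-/

open Matrix

/-- Euclidean dot product on `ℝ^n`. -/
noncomputable def dotv {n : ℕ} (u v : Fin n → ℝ) : ℝ := ∑ i, u i * v i

/-- Euclidean norm on `ℝ^n`. -/
noncomputable def enormv {n : ℕ} (u : Fin n → ℝ) : ℝ := Real.sqrt (dotv u u)

/-- Arithmetic mean of a vector. -/
noncomputable def meanv {n : ℕ} (f : Fin n → ℝ) : ℝ := (∑ i, f i) / n

/-- Mean-centered vector `f̄ = f - Mean(f)·𝟙`. -/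
noncomputable def centv {n : ℕ} (f : Fin n → ℝ) : Fin n → ℝ := fun i => f i - meanv f

/-- Variance of a vector: `Var(f) = (1/n)‖f̄‖²`. -/
noncomputable def varv {n : ℕ} (f : Fin n → ℝ) : ℝ := (∑ i, (centv f i) ^ 2) / n

/-- The `j`-th column of a matrix. -/
noncomputable def col {n m : ℕ} (A : Matrix (Fin n) (Fin m) ℝ) (j : Fin m) : Fin n → ℝ :=
  fun i => A i j

/-- Cosine similarity matrix: `S_c(A)_{jk} = (A_j·A_k)/(‖A_j‖‖A_k‖)`. -/
noncomputable def cosSim {n m : ℕ} (A : Matrix (Fin n) (Fin m) ℝ) : Matrix (Fin m) (Fin m) ℝ :=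
  fun j k => dotv (_root_.col A j) (_root_.col A k) / (enormv (_root_.col A j) * enormv (_root_.col A k))

/-- Column-wise mean centering of a matrix: `Ā_j = A_j − Mean(A_j)·𝟙`. -/
noncomputable def centM {n m : ℕ} (A : Matrix (Fin n) (Fin m) ℝ) : Matrix (Fin n) (Fin m) ℝ :=
  fun i j => A i j - meanv (_root_.col A j)

/-- Pearson correlation matrix: cosine similarity of the centered columns. -/
noncomputable def corrM {n m : ℕ} (A : Matrix (Fin n) (Fin m) ℝ) : Matrix (Fin m) (Fin m) ℝ :=
  cosSim (centM A)

/-- Frobenius norm of a matrix. -/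
noncomputable def frob {n m : ℕ} (A : Matrix (Fin n) (Fin m) ℝ) : ℝ :=
  Real.sqrt (∑ i, ∑ j, (A i j) ^ 2)

/-- Given the diagonal entries `σ` of a diagonal matrix `Σ` with nonnegative entries,
`Isig σ` is the diagonal matrix `I_Σ` with `(I_Σ)_{ii} = 1` if `Σ_{ii} > 0` and `0` otherwise. -/
noncomputable def Isig {n : ℕ} (σ : Fin n → ℝ) : Matrix (Fin n) (Fin n) ℝ :=
  Matrix.diagonal (fun i => if 0 < σ i then (1 : ℝ) else 0)

theorem Matrix.transpose_mul_self_mul_diagonal {R m n : Type*} [CommSemiring R] [Fintype m]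
    [Fintype n] [DecidableEq n] (A : Matrix m n R) (d : n → R) :
    (A * diagonal d)ᵀ * (A * diagonal d) = diagonal d * (Aᵀ * A) * diagonal d := by
  rw [transpose_mul, diagonal_transpose, Matrix.mul_assoc, Matrix.mul_assoc, Matrix.mul_assoc]

section LinearIsometry

variable {𝕜 W V : Type*} [RCLike 𝕜] [AddCommGroup W] [Module 𝕜 W]
  [NormedAddCommGroup V] [InnerProductSpace 𝕜 V] [FiniteDimensional 𝕜 V]

theorem LinearMap.exists_linearIsometry_comp_eq {T U : W →ₗ[𝕜] V} (h : ∀ x, ‖T x‖ = ‖U x‖) :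
    ∃ L : V →ₗᵢ[𝕜] V, L.toLinearMap ∘ₗ T = U := by
  have hker : LinearMap.ker T ≤ LinearMap.ker U := fun x hx =>
    norm_eq_zero.1 <| (h x).symm.trans <| norm_eq_zero.2 hx
  let L₀ : LinearMap.range T →ₗ[𝕜] V :=
    (LinearMap.ker T).liftQ U hker ∘ₗ T.quotKerEquivRange.symm.toLinearMap
  have hL₀ (x : W) : L₀ ⟨T x, LinearMap.mem_range_self T x⟩ = U x := by
    simp [L₀, LinearMap.quotKerEquivRange_symm_apply_image]
  let L₁ : LinearMap.range T →ₗᵢ[𝕜] V :=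
    { L₀ with
      norm_map' := by rintro ⟨-, x, rfl⟩; exact (congrArg norm (hL₀ x)).trans (h x).symm }
  exact ⟨L₁.extend, LinearMap.ext fun x => (L₁.extend_apply ⟨T x, _⟩).trans (hL₀ x)⟩

end LinearIsometry

namespace Matrix

variable {𝕜 m n : Type*} [RCLike 𝕜] [Fintype m] [DecidableEq m] [Fintype n] [DecidableEq n]

theorem toEuclideanLin_symm_mem_unitaryGroup (L : EuclideanSpace 𝕜 n →ₗᵢ[𝕜] EuclideanSpace 𝕜 n) :
    toEuclideanLin.symm L.toLinearMap ∈ unitaryGroup n 𝕜 := by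
  rw [mem_unitaryGroup_iff', star_eq_conjTranspose, ← toEuclideanLin.injective.eq_iff,
    toLpLin_mul_same, toEuclideanLin_conjTranspose_eq_adjoint, LinearEquiv.apply_symm_apply,
    L.adjoint_comp_self', toLpLin_one]

theorem norm_toEuclideanLin_eq_of_conjTranspose_mul_self_eq {A B : Matrix m n 𝕜}
    (h : Aᴴ * A = Bᴴ * B) (x : EuclideanSpace 𝕜 n) :
    ‖toEuclideanLin A x‖ = ‖toEuclideanLin B x‖ := by
  have key (C : Matrix m n 𝕜) :
      ‖toEuclideanLin C x‖ ^ 2 = RCLike.re (inner 𝕜 x (toEuclideanLin (Cᴴ * C) x)) := by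
    rw [toLpLin_mul_same, toEuclideanLin_conjTranspose_eq_adjoint, LinearMap.comp_apply,
      LinearMap.adjoint_inner_right, ← inner_self_eq_norm_sq (𝕜 := 𝕜)]
  rw [← sq_eq_sq₀ (norm_nonneg _) (norm_nonneg _), key, key, h]

theorem exists_mem_unitaryGroup_mul_eq_of_conjTranspose_mul_self_eq {A B : Matrix m n 𝕜}
    (h : Aᴴ * A = Bᴴ * B) : ∃ Q ∈ unitaryGroup m 𝕜, Q * A = B := by
  obtain ⟨L, hL⟩ := LinearMap.exists_linearIsometry_comp_eq
    (norm_toEuclideanLin_eq_of_conjTranspose_mul_self_eq h)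
  refine ⟨_, toEuclideanLin_symm_mem_unitaryGroup L, toEuclideanLin.injective ?_⟩
  rw [toLpLin_mul_same, LinearEquiv.apply_symm_apply, hL]

end Matrix

section Correlation

variable {n n' m : ℕ}

theorem dotv_self_nonneg (u : Fin n → ℝ) : 0 ≤ dotv u u :=
  Finset.sum_nonneg fun i _ => mul_self_nonneg (u i)

theorem dotv_self_pos {u : Fin n → ℝ} : 0 < dotv u u ↔ u ≠ 0 :=
  (dotv_self_nonneg u).lt_iff_ne'.trans (not_congr dotProduct_self_eq_zero)

theorem enormv_pos {u : Fin n → ℝ} : 0 < enormv u ↔ u ≠ 0 :=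
  Real.sqrt_pos.trans dotv_self_pos

theorem dotv_col_col (A : Matrix (Fin n) (Fin m) ℝ) (j k : Fin m) :
    dotv (_root_.col A j) (_root_.col A k) = (Aᵀ * A) j k := by
  simp [dotv, _root_.col, mul_apply]

theorem enormv_col (A : Matrix (Fin n) (Fin m) ℝ) (j : Fin m) :
    enormv (_root_.col A j) = √((Aᵀ * A) j j) := by
  rw [enormv, dotv_col_col]

theorem cosSim_apply (A : Matrix (Fin n) (Fin m) ℝ) (j k : Fin m) :
    cosSim A j k = (Aᵀ * A) j k / (√((Aᵀ * A) j j) * √((Aᵀ * A) k k)) := by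
  rw [cosSim, dotv_col_col, enormv_col, enormv_col]

theorem cosSim_eq_of_transpose_mul_self_eq {A : Matrix (Fin n) (Fin m) ℝ}
    {B : Matrix (Fin n') (Fin m) ℝ} (h : Aᵀ * A = Bᵀ * B) : cosSim A = cosSim B := by
  ext j k
  rw [cosSim_apply, cosSim_apply, h]

theorem cosSim_mul_of_transpose_mul_self_eq_one {Q : Matrix (Fin n') (Fin n) ℝ}
    (hQ : Qᵀ * Q = 1) (A : Matrix (Fin n) (Fin m) ℝ) : cosSim (Q * A) = cosSim A :=
  cosSim_eq_of_transpose_mul_self_eq <| by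
    rw [transpose_mul, Matrix.mul_assoc, ← Matrix.mul_assoc Qᵀ, hQ, Matrix.one_mul]

theorem cosSim_mul_diagonal {d : Fin m → ℝ} (hd : ∀ j, 0 < d j)
    (A : Matrix (Fin n) (Fin m) ℝ) : cosSim (A * diagonal d) = cosSim A := by
  ext j k
  have hsqrt (i : Fin m) : √(d i * (Aᵀ * A) i i * d i) = d i * √((Aᵀ * A) i i) := by
    rw [mul_comm, ← mul_assoc, Real.sqrt_mul (mul_self_nonneg _), Real.sqrt_mul_self (hd i).le]
  simp only [cosSim_apply, transpose_mul_self_mul_diagonal, mul_diagonal, diagonal_mul, hsqrt]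
  have := (hd j).ne'
  have := (hd k).ne'
  field_simp

theorem cosSim_apply_self_eq_one_iff (A : Matrix (Fin n) (Fin m) ℝ) (j : Fin m) :
    cosSim A j j = 1 ↔ _root_.col A j ≠ 0 := by
  rw [cosSim_apply, ← dotv_col_col, Real.mul_self_sqrt (dotv_self_nonneg _), div_self_eq_one₀]
  exact (dotv_self_nonneg _).lt_iff_ne'.symm.trans dotv_self_pos

noncomputable def normalizeCols (A : Matrix (Fin n) (Fin m) ℝ) : Matrix (Fin n) (Fin m) ℝ :=
  A * diagonal fun j => (enormv (_root_.col A j))⁻¹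

theorem cosSim_eq_transpose_mul_self_normalizeCols (A : Matrix (Fin n) (Fin m) ℝ) :
    cosSim A = (normalizeCols A)ᵀ * normalizeCols A := by
  ext j k
  rw [normalizeCols, transpose_mul_self_mul_diagonal, mul_diagonal, diagonal_mul, cosSim,
    dotv_col_col, div_eq_mul_inv, mul_inv]
  ring

theorem normalizeCols_mul_diagonal_enormv {A : Matrix (Fin n) (Fin m) ℝ}
    (hA : ∀ j, _root_.col A j ≠ 0) :
    normalizeCols A * diagonal (fun j => enormv (_root_.col A j)) = A := by
  rw [normalizeCols, Matrix.mul_assoc, diagonal_mul_diagonal]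
  simp [fun j => inv_mul_cancel₀ (enormv_pos.2 (hA j)).ne']

end Correlation

theorem corr_eq_iff_orthogonal_diag_general {n m : ℕ}
    (O S : Matrix (Fin n) (Fin m) ℝ)
    (hS : ∀ j, _root_.col (centM S) j ≠ 0) :
    corrM O = corrM S ↔
      ∃ (Q : Matrix (Fin n) (Fin n) ℝ) (d : Fin m → ℝ),
        Qᵀ * Q = 1 ∧ (∀ j, 0 < d j) ∧ Q * centM O * Matrix.diagonal d = centM S := by
  unfold corrM
  constructor
  · intro h
    have hO (j : Fin m) : _root_.col (centM O) j ≠ 0 := by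
      rw [← cosSim_apply_self_eq_one_iff, h, cosSim_apply_self_eq_one_iff]
      exact hS j
    obtain ⟨Q, hQ, hQO⟩ := exists_mem_unitaryGroup_mul_eq_of_conjTranspose_mul_self_eq
      (A := normalizeCols (centM O)) (B := normalizeCols (centM S)) (by
        simpa only [conjTranspose_eq_transpose_of_trivial,
          ← cosSim_eq_transpose_mul_self_normalizeCols] using h)
    refine ⟨Q, fun j => (enormv (_root_.col (centM O) j))⁻¹ * enormv (_root_.col (centM S) j),
      ?_, fun j => mul_pos (inv_pos.2 (enormv_pos.2 (hO j))) (enormv_pos.2 (hS j)), ?_⟩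
    · simpa only [mem_unitaryGroup_iff', star_eq_conjTranspose,
        conjTranspose_eq_transpose_of_trivial] using hQ
    · rw [Matrix.mul_assoc, ← diagonal_mul_diagonal, ← Matrix.mul_assoc (centM O), ← normalizeCols,
        ← Matrix.mul_assoc, hQO, normalizeCols_mul_diagonal_enormv hS]
  · rintro ⟨Q, d, hQ, hd, hQOS⟩
    rw [← hQOS, Matrix.mul_assoc, cosSim_mul_of_transpose_mul_self_eq_one hQ,
      cosSim_mul_diagonal hd]

/-- Two matrices whose centered columns are all nonzero have the same Pearson
correlation matrix iff their centered matrices are related by an orthogonal matrix and a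
positive diagonal rescaling. -/
theorem corr_eq_iff_orthogonal_diag {n m : ℕ}
    (O S : Matrix (Fin n) (Fin m) ℝ)
    (hO : ∀ j, _root_.col (centM O) j ≠ 0) (hS : ∀ j, _root_.col (centM S) j ≠ 0) :
    corrM O = corrM S ↔
      ∃ (Q : Matrix (Fin n) (Fin n) ℝ) (d : Fin m → ℝ),
        Qᵀ * Q = 1 ∧ (∀ j, 0 < d j) ∧ Q * centM O * Matrix.diagonal d = centM S :=
  corr_eq_iff_orthogonal_diag_general O S hS
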